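/- Consider the optimization problem max_{q ∈ Δ^k, KL(q‖p₀) ≤ ε} ⟨q, g⟩ with ε > 0, g ∈ ℝ^k, and p₀ strictly positive. If g is not constant, then the optimal solution has the form q*_i = p₀ᵢ exp(η gᵢ)/Σⱼ p₀ⱼ exp(η gⱼ) for the unique η > 0 satisfying KL(q* ‖ p₀) = ε, provided such η < ∞ exists (i.e., the KL constraint is active); if g is constant, the optimum is q* = p₀. -/
import Mathlib


open Real Finset


lemma gibbs_term_le {q r : ℝ} (hq : 0 ≤ q) (hr : 0 < r) :
    q * Real.log (r / q) ≤ r - q := by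
  rcases eq_or_lt_of_le hq with h | h
  · simp [← h, hr.le]
  · have h1 : 0 < r / q := div_pos hr h
    have h2 := mul_le_mul_of_nonneg_left (Real.log_le_sub_one_of_pos h1) hq
    have h3 : q * (r / q - 1) = r - q := by field_simp
    linarith

lemma gibbs_nonneg {k : ℕ} (q r : Fin k → ℝ) (hq : ∀ i, 0 ≤ q i)
    (hq1 : ∑ i, q i = 1) (hr : ∀ i, 0 < r i) (hr1 : ∑ i, r i = 1) :
    0 ≤ ∑ i, q i * Real.log (q i / r i) := by
  have key : ∑ i, q i * Real.log (r i / q i) ≤ 0 := by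
    calc ∑ i, q i * Real.log (r i / q i) ≤ ∑ i, (r i - q i) :=
          Finset.sum_le_sum fun i _ => gibbs_term_le (hq i) (hr i)
      _ = 0 := by rw [Finset.sum_sub_distrib, hq1, hr1]; ring
  have hswap : ∑ i, q i * Real.log (q i / r i)
      = -∑ i, q i * Real.log (r i / q i) := by
    rw [← Finset.sum_neg_distrib]
    refine Finset.sum_congr rfl fun i _ => ?_
    rcases eq_or_lt_of_le (hq i) with h | h
    · simp [← h]
    · rw [Real.log_div h.ne' (hr i).ne', Real.log_div (hr i).ne' h.ne']; ring
  linarith [key, hswap.ge]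

lemma gibbs_eq {k : ℕ} (q r : Fin k → ℝ) (hq : ∀ i, 0 ≤ q i)
    (hq1 : ∑ i, q i = 1) (hr : ∀ i, 0 < r i) (hr1 : ∑ i, r i = 1)
    (h : ∑ i, q i * Real.log (q i / r i) = 0) : ∀ i, q i = r i := by
  by_contra hc
  push_neg at hc
  obtain ⟨i₀, hi₀⟩ := hc
  have key : ∑ i, q i * Real.log (r i / q i) < 0 := by
    have hlt : ∑ i, q i * Real.log (r i / q i) < ∑ i, (r i - q i) := by
      refine Finset.sum_lt_sum (fun i _ => gibbs_term_le (hq i) (hr i))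
        ⟨i₀, Finset.mem_univ i₀, ?_⟩
      rcases eq_or_lt_of_le (hq i₀) with h0 | h0
      · simpa [← h0] using (hr i₀)
      · have h1 : 0 < r i₀ / q i₀ := div_pos (hr i₀) h0
        have h2 : r i₀ / q i₀ ≠ 1 := by
          intro he
          exact hi₀ ((div_eq_one_iff_eq h0.ne').mp he).symm
        have := Real.log_lt_sub_one_of_pos h1 h2
        have h3 : q i₀ * Real.log (r i₀ / q i₀) < q i₀ * (r i₀ / q i₀ - 1) :=
          (mul_lt_mul_iff_right₀ h0).mpr this
        have h4 : q i₀ * (r i₀ / q i₀ - 1) = r i₀ - q i₀ := by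
          field_simp
        linarith
    have : ∑ i, (r i - q i) = 0 := by rw [Finset.sum_sub_distrib, hq1, hr1]; ring
    linarith
  have hswap : ∑ i, q i * Real.log (q i / r i)
      = -∑ i, q i * Real.log (r i / q i) := by
    rw [← Finset.sum_neg_distrib]
    refine Finset.sum_congr rfl fun i _ => ?_
    rcases eq_or_lt_of_le (hq i) with h0 | h0
    · simp [← h0]
    · rw [Real.log_div h0.ne' (hr i).ne', Real.log_div (hr i).ne' h0.ne']; ring
  rw [hswap] at h
  linarith

/-- Solution of the KL-constrained linear maximization
max_{q ∈ Δ^k, KL(q‖p₀) ≤ ε} ⟨q, g⟩: if g is not constant and some η > 0 makes the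
KL constraint active for the Gibbs distribution q*(η), this η is unique and q*(η)
is optimal; if g is constant, p₀ is optimal. -/
theorem kl_constrained_linear_max
    (k : ℕ) (hk : 0 < k) (g p₀ : Fin k → ℝ) (ε : ℝ) (hε : 0 < ε)
    (hp₀pos : ∀ i, 0 < p₀ i) (hp₀sum : ∑ i, p₀ i = 1)
    (qstar : ℝ → Fin k → ℝ)
    (hqstar : ∀ η i, qstar η i
      = p₀ i * Real.exp (η * g i) / ∑ j, p₀ j * Real.exp (η * g j)) :
    ((∃ i j, g i ≠ g j) →
      (∀ η η' : ℝ, 0 < η → 0 < η' →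
        (∑ i, qstar η i * Real.log (qstar η i / p₀ i)) = ε →
        (∑ i, qstar η' i * Real.log (qstar η' i / p₀ i)) = ε →
        η = η')
      ∧
      (∀ η : ℝ, 0 < η →
        (∑ i, qstar η i * Real.log (qstar η i / p₀ i)) = ε →
        ∀ q : Fin k → ℝ, (∀ i, 0 ≤ q i) → (∑ i, q i = 1) →
          (∑ i, q i * Real.log (q i / p₀ i)) ≤ ε →
          ∑ i, q i * g i ≤ ∑ i, qstar η i * g i))
    ∧
    ((∀ i j, g i = g j) →
      ∀ q : Fin k → ℝ, (∀ i, 0 ≤ q i) → (∑ i, q i = 1) →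
        (∑ i, q i * Real.log (q i / p₀ i)) ≤ ε →
        ∑ i, q i * g i ≤ ∑ i, p₀ i * g i) := by
  -- partition function
  set Z : ℝ → ℝ := fun η => ∑ j, p₀ j * Real.exp (η * g j) with hZdef
  have hne : (Finset.univ : Finset (Fin k)).Nonempty := by
    exact Finset.univ_nonempty_iff.mpr (Fin.pos_iff_nonempty.mp hk)
  have hZpos : ∀ η, 0 < Z η := fun η =>
    Finset.sum_pos (fun j _ => mul_pos (hp₀pos j) (Real.exp_pos _)) hne
  have hqpos : ∀ η i, 0 < qstar η i := by
    intro η i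
    rw [hqstar]
    exact div_pos (mul_pos (hp₀pos i) (Real.exp_pos _)) (hZpos η)
  have hqsum : ∀ η, ∑ i, qstar η i = 1 := by
    intro η
    have : ∑ i, qstar η i = (∑ i, p₀ i * Real.exp (η * g i)) / Z η := by
      rw [Finset.sum_div]
      exact Finset.sum_congr rfl fun i _ => hqstar η i
    rw [this]
    exact div_self (hZpos η).ne'
  -- log of the ratio
  have hlogq : ∀ η i, Real.log (qstar η i / p₀ i) = η * g i - Real.log (Z η) := by
    intro η i
    have h1 : qstar η i / p₀ i = Real.exp (η * g i) / Z η := by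
      rw [hqstar, div_div, mul_comm (∑ j, p₀ j * Real.exp (η * g j)) (p₀ i),
        mul_div_mul_left _ _ (hp₀pos i).ne']
    rw [h1, Real.log_div (Real.exp_ne_zero _) (hZpos η).ne', Real.log_exp]
  -- KL(q(η) ‖ p₀) identity
  have hKLq : ∀ η, ∑ i, qstar η i * Real.log (qstar η i / p₀ i)
      = η * (∑ i, qstar η i * g i) - Real.log (Z η) := by
    intro η
    have : ∀ i, qstar η i * Real.log (qstar η i / p₀ i)
        = η * (qstar η i * g i) - Real.log (Z η) * qstar η i := by
      intro i; rw [hlogq]; ring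
    rw [Finset.sum_congr rfl fun i _ => this i, Finset.sum_sub_distrib,
      ← Finset.mul_sum, ← Finset.mul_sum, hqsum]
    ring
  -- KL decomposition relative to qstar η
  have hdecomp : ∀ (η : ℝ) (q : Fin k → ℝ), (∀ i, 0 ≤ q i) → (∑ i, q i = 1) →
      ∑ i, q i * Real.log (q i / qstar η i)
        = (∑ i, q i * Real.log (q i / p₀ i)) - η * (∑ i, q i * g i)
          + Real.log (Z η) := by
    intro η q hq hq1
    have hterm : ∀ i, q i * Real.log (q i / qstar η i)
        = q i * Real.log (q i / p₀ i) - η * (q i * g i)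
          + Real.log (Z η) * q i := by
      intro i
      rcases eq_or_lt_of_le (hq i) with h0 | h0
      · simp [← h0]
      · have e1 : Real.log (q i / qstar η i)
            = Real.log (q i / p₀ i) - Real.log (qstar η i / p₀ i) := by
          rw [Real.log_div h0.ne' (hqpos η i).ne',
            Real.log_div h0.ne' (hp₀pos i).ne',
            Real.log_div (hqpos η i).ne' (hp₀pos i).ne']
          ring
        rw [e1, hlogq]; ring
    rw [Finset.sum_congr rfl fun i _ => hterm i]
    rw [Finset.sum_add_distrib, Finset.sum_sub_distrib, ← Finset.mul_sum,
      ← Finset.mul_sum, hq1]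
    ring
  constructor
  · intro ⟨i₁, j₁, hij⟩
    -- core optimality estimate
    have hopt : ∀ η : ℝ, 0 < η →
        (∑ i, qstar η i * Real.log (qstar η i / p₀ i)) = ε →
        ∀ q : Fin k → ℝ, (∀ i, 0 ≤ q i) → (∑ i, q i = 1) →
          (∑ i, q i * Real.log (q i / p₀ i)) ≤ ε →
          ∑ i, q i * g i ≤ ∑ i, qstar η i * g i := by
      intro η hη hKL q hq hq1 hqKL
      have h0 := gibbs_nonneg q (qstar η) hq hq1 (hqpos η) (hqsum η)
      rw [hdecomp η q hq hq1] at h0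
      have hε' : ε = η * (∑ i, qstar η i * g i) - Real.log (Z η) := by
        rw [← hKL, hKLq]
      have : η * (∑ i, q i * g i) ≤ η * (∑ i, qstar η i * g i) := by linarith
      exact le_of_mul_le_mul_left (by linarith) hη
    refine ⟨?_, hopt⟩
    intro η η' hη hη' hKL hKL'
    -- both Gibbs distributions are optimal, hence same value
    have h1 := hopt η hη hKL (qstar η') (fun i => (hqpos η' i).le) (hqsum η')
      (le_of_eq hKL')
    have h2 := hopt η' hη' hKL' (qstar η) (fun i => (hqpos η i).le) (hqsum η)
      (le_of_eq hKL)
    have hS : ∑ i, qstar η' i * g i = ∑ i, qstar η i * g i := le_antisymm h1 h2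
    -- KL(q(η') ‖ q(η)) = 0
    have hKL0 : ∑ i, qstar η' i * Real.log (qstar η' i / qstar η i) = 0 := by
      rw [hdecomp η (qstar η') (fun i => (hqpos η' i).le) (hqsum η'), hKL', hS]
      have : ε = η * (∑ i, qstar η i * g i) - Real.log (Z η) := by
        rw [← hKL, hKLq]
      linarith
    have heq := gibbs_eq (qstar η') (qstar η) (fun i => (hqpos η' i).le)
      (hqsum η') (hqpos η) (hqsum η) hKL0
    -- extract η = η' from equality at i₁ and j₁
    have key : ∀ i, Real.exp (η' * g i) * Z η = Real.exp (η * g i) * Z η' := by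
      intro i
      have h := heq i
      rw [hqstar, hqstar] at h
      rw [div_eq_div_iff (hZpos η').ne' (hZpos η).ne'] at h
      have := mul_left_cancel₀ (hp₀pos i).ne'
        (by rw [← mul_assoc, ← mul_assoc]; exact h : p₀ i * (Real.exp (η' * g i) * Z η) = p₀ i * (Real.exp (η * g i) * Z η'))
      exact this
    have hcross : Real.exp (η' * g i₁) * Real.exp (η * g j₁)
        = Real.exp (η * g i₁) * Real.exp (η' * g j₁) := by
      have hi := key i₁
      have hj := key j₁
      have hZη := (hZpos η).ne'
      have hZη' := (hZpos η').ne'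
      have : (Real.exp (η' * g i₁) * Z η) * (Real.exp (η * g j₁) * Z η')
          = (Real.exp (η * g i₁) * Z η') * (Real.exp (η' * g j₁) * Z η) := by
        rw [hi, hj]
      have h2 : (Real.exp (η' * g i₁) * Real.exp (η * g j₁)) * (Z η * Z η')
          = (Real.exp (η * g i₁) * Real.exp (η' * g j₁)) * (Z η * Z η') := by
        ring_nf
        ring_nf at this
        linarith
      exact mul_right_cancel₀ (mul_ne_zero hZη hZη') h2
    rw [← Real.exp_add, ← Real.exp_add] at hcross
    have hlin := Real.exp_injective hcross
    have hfac : (η' - η) * (g i₁ - g j₁) = 0 := by linarith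
    rcases mul_eq_zero.mp hfac with h | h
    · linarith
    · exact absurd (by linarith : g i₁ = g j₁) hij
  · intro hconst q hq hq1 hqKL
    have i₀ : Fin k := ⟨0, hk⟩
    have e1 : ∀ (p : Fin k → ℝ), (∑ i, p i = 1) → ∑ i, p i * g i = g i₀ := by
      intro p hp
      calc ∑ i, p i * g i = ∑ i, p i * g i₀ :=
            Finset.sum_congr rfl fun i _ => by rw [hconst i i₀]
        _ = (∑ i, p i) * g i₀ := by rw [Finset.sum_mul]
        _ = g i₀ := by rw [hp]; ring
    rw [e1 q hq1, e1 p₀ hp₀sum]
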